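/- arXiv:2407.15462 — 5 statements merged into one kernel-verified Lean document; each statement's English description precedes it below -/
import Mathlib

section
/- Let K be a positive integer with K ≤ |X|, and for each p with 1 ≤ p ≤ P let X_{K,p} ⊆ X be a top-K set for the component score s_p. Then for every item x ∈ X \ (∪_{p=1}^P X_{K,p}), the MoL score satisfies φ(x) ≤ max_{1 ≤ p ≤ P} min_{y ∈ X_{K,p}} s_p(y); that is, the MoL score of any item missed by the per-embedding top-K candidate retrieval is at most the largest, over components p, of the K-th largest component score s_p. -/
/-- The Mixture-of-Logits score `φ(x) = ∑ p, π p x * s p x`. -/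
def molScore {α : Type*} {P : ℕ} (π s : Fin P → α → ℝ) (x : α) : ℝ :=
  ∑ p, π p x * s p x

/-- `T` is a top-`K` set of `X` for the score `s`: `T ⊆ X`, `|T| = K`, and every
member of `T` scores at least as high as every non-member of `T` in `X`. -/
def IsTopK {α : Type*} (X : Finset α) (s : α → ℝ) (K : ℕ) (T : Finset α) : Prop :=
  T ⊆ X ∧ T.card = K ∧ ∀ y ∈ T, ∀ z ∈ X, z ∉ T → s z ≤ s y

/-- Any item missed by the per-embedding top-`K` retrieval has MoL score at
most the largest, over components `p`, of the `K`-th largest component score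
(i.e. the minimum of `s p` over the top-`K` set `X_{K,p}`). -/
theorem molScore_le_of_not_mem_topK_per_embedding {α : Type*} (P K : ℕ)
    (hP : 0 < P) (hK : 0 < K) (X : Finset α) (hX : X.Nonempty) (hKX : K ≤ X.card)
    (s π : Fin P → α → ℝ)
    (hπ0 : ∀ p, ∀ x ∈ X, 0 ≤ π p x)
    (hπ1 : ∀ x ∈ X, ∑ p, π p x = 1)
    (XK : Fin P → Finset α) (hXK : ∀ p, IsTopK X (s p) K (XK p)) :
    ∀ x ∈ X, (∀ p, x ∉ XK p) →
      molScore π s x ≤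
        Finset.univ.sup' ⟨⟨0, hP⟩, Finset.mem_univ _⟩ (fun p =>
          (XK p).inf' (Finset.card_pos.mp (by rw [(hXK p).2.1]; exact hK)) (s p)) := by
  intro x hx hnot
  set M := Finset.univ.sup' ⟨⟨0, hP⟩, Finset.mem_univ _⟩ (fun p =>
    (XK p).inf' (Finset.card_pos.mp (by rw [(hXK p).2.1]; exact hK)) (s p)) with hM
  have key : ∀ p : Fin P, s p x ≤ M := by
    intro p
    have h1 : s p x ≤ (XK p).inf' (Finset.card_pos.mp (by rw [(hXK p).2.1]; exact hK)) (s p) := by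
      apply Finset.le_inf'
      intro y hy
      exact (hXK p).2.2 y hy x hx (hnot p)
    refine h1.trans ?_
    exact Finset.le_sup' (fun p => (XK p).inf' (Finset.card_pos.mp (by rw [(hXK p).2.1]; exact hK)) (s p)) (Finset.mem_univ p)
  calc molScore π s x = ∑ p, π p x * s p x := rfl
    _ ≤ ∑ p, π p x * M := by
        apply Finset.sum_le_sum
        intro p _
        exact mul_le_mul_of_nonneg_left (key p) (hπ0 p x hx)
    _ = (∑ p, π p x) * M := by rw [Finset.sum_mul]
    _ = M := by rw [hπ1 x hx, one_mul]
end

section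
/- Upper bound on the gap of the top-K-per-embedding heuristic: let K ≤ |X| be a positive integer, for each 1 ≤ p ≤ P let X_{K,p} ⊆ X be a top-K set for s_p, and let G = ∪_{p=1}^P X_{K,p}. Let X* ⊆ G be a top-K set for φ restricted to G (the heuristic's returned items), let S_min = min_{y ∈ X*} φ(y), and let X_K ⊆ X be a top-K set for φ on all of X. If X_K \ X* is nonempty, then the gap S_Δ = max{φ(x) : x ∈ X_K \ X*} − S_min satisfies S_Δ ≤ max(0, max_{1 ≤ p ≤ P} min_{y ∈ X_{K,p}} s_p(y) − S_min). -/
/-- Upper bound on the gap of the top-`K`-per-embedding heuristic: the gap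
`S_Δ = max {φ(x) : x ∈ X_K \ X*} - S_min` is at most
`max (0, max_p min_{y ∈ X_{K,p}} s_p(y) - S_min)`. -/
theorem gap_topK_per_embedding_le {α : Type*} [DecidableEq α] (P K : ℕ)
    (hP : 0 < P) (hK : 0 < K) (X : Finset α) (hX : X.Nonempty) (hKX : K ≤ X.card)
    (s π : Fin P → α → ℝ)
    (hπ0 : ∀ p, ∀ x ∈ X, 0 ≤ π p x)
    (hπ1 : ∀ x ∈ X, ∑ p, π p x = 1)
    (XK : Fin P → Finset α) (hXK : ∀ p, IsTopK X (s p) K (XK p))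
    (Xstar : Finset α)
    (hstar : IsTopK (Finset.univ.biUnion XK) (molScore π s) K Xstar)
    (XKfull : Finset α) (hfull : IsTopK X (molScore π s) K XKfull)
    (hne : (XKfull \ Xstar).Nonempty) :
    (XKfull \ Xstar).sup' hne (molScore π s) -
        Xstar.inf' (Finset.card_pos.mp (by rw [hstar.2.1]; exact hK)) (molScore π s) ≤
      max 0
        (Finset.univ.sup' ⟨⟨0, hP⟩, Finset.mem_univ _⟩ (fun p =>
            (XK p).inf' (Finset.card_pos.mp (by rw [(hXK p).2.1]; exact hK)) (s p)) -
          Xstar.inf' (Finset.card_pos.mp (by rw [hstar.2.1]; exact hK)) (molScore π s)) := by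
  set Smin := Xstar.inf' (Finset.card_pos.mp (by rw [hstar.2.1]; exact hK)) (molScore π s) with hS
  set M := Finset.univ.sup' ⟨⟨0, hP⟩, Finset.mem_univ _⟩ (fun p =>
      (XK p).inf' (Finset.card_pos.mp (by rw [(hXK p).2.1]; exact hK)) (s p)) with hM
  rw [sub_le_iff_le_add]
  apply Finset.sup'_le
  intro x hx
  obtain ⟨hxfull, hxstar⟩ := Finset.mem_sdiff.mp hx
  have hxX : x ∈ X := hfull.1 hxfull
  by_cases hG : x ∈ Finset.univ.biUnion XK
  · -- x is in G but not X*: φ x ≤ Smin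
    have h1 : molScore π s x ≤ Smin := by
      apply Finset.le_inf'
      intro y hy
      exact hstar.2.2 y hy x hG hxstar
    calc molScore π s x ≤ Smin := h1
      _ ≤ max 0 (M - Smin) + Smin := by
          nlinarith [le_max_left (0:ℝ) (M - Smin)]
  · -- x is not in G: s p x ≤ inf' for every p
    have h1 : molScore π s x ≤ M := by
      have hnp : ∀ p, x ∉ XK p := by
        intro p hp
        exact hG (Finset.mem_biUnion.mpr ⟨p, Finset.mem_univ _, hp⟩)
      have h2 : ∀ p : Fin P, s p x ≤ M := by
        intro p
        have h3 : s p x ≤ (XK p).inf' (Finset.card_pos.mp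
            (by rw [(hXK p).2.1]; exact hK)) (s p) := by
          apply Finset.le_inf'
          intro y hy
          exact (hXK p).2.2 y hy x hxX (hnp p)
        exact h3.trans (Finset.le_sup' (f := fun p => (XK p).inf' (Finset.card_pos.mp
            (by rw [(hXK p).2.1]; exact hK)) (s p)) (Finset.mem_univ p))
      calc molScore π s x = ∑ p, π p x * s p x := rfl
        _ ≤ ∑ p, π p x * M := by
            apply Finset.sum_le_sum
            intro p _
            exact mul_le_mul_of_nonneg_left (h2 p) (hπ0 p x hxX)
        _ = (∑ p, π p x) * M := by rw [Finset.sum_mul]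
        _ = M := by rw [hπ1 x hxX, one_mul]
    calc molScore π s x ≤ M := h1
      _ ≤ max 0 (M - Smin) + Smin := by
          nlinarith [le_max_right (0:ℝ) (M - Smin)]
end

section
/- Correctness of the filtering step of the exact two-pass algorithm: let K ≤ |X| be a positive integer, let G ⊆ X be any subset with |G| ≥ K, and set S_min = min_{y ∈ G} φ(y). If x ∈ X is a top-K item for φ, i.e. the number of items y ∈ X with φ(y) > φ(x) is strictly less than K, then max_{1 ≤ p ≤ P} s_p(x) ≥ S_min; consequently x belongs to the filtered set G' = { z ∈ X : s_p(z) ≥ S_min for some 1 ≤ p ≤ P }. -/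
/-- Correctness of the filtering step of the exact two-pass algorithm: every
top-`K` item `x` for `φ` (fewer than `K` items beat it) has some component
score at least `S_min = min_{y ∈ G} φ(y)`, hence belongs to the filtered set
`G' = {z ∈ X : ∃ p, s p z ≥ S_min}`. -/
theorem topK_item_survives_filter {α : Type*} [DecidableEq α] (P K : ℕ)
    (hP : 0 < P) (hK : 0 < K) (X : Finset α) (hX : X.Nonempty) (hKX : K ≤ X.card)
    (s π : Fin P → α → ℝ)
    (hπ0 : ∀ p, ∀ x ∈ X, 0 ≤ π p x)
    (hπ1 : ∀ x ∈ X, ∑ p, π p x = 1)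
    (G : Finset α) (hG : G ⊆ X) (hGK : K ≤ G.card)
    (x : α) (hx : x ∈ X)
    (hxTop : (X.filter (fun y => molScore π s x < molScore π s y)).card < K) :
    G.inf' (Finset.card_pos.mp (lt_of_lt_of_le hK hGK)) (molScore π s) ≤
        Finset.univ.sup' ⟨⟨0, hP⟩, Finset.mem_univ _⟩ (fun p => s p x) ∧
      ∃ p : Fin P,
        G.inf' (Finset.card_pos.mp (lt_of_lt_of_le hK hGK)) (molScore π s) ≤ s p x := by
  set M := Finset.univ.sup' ⟨⟨0, hP⟩, Finset.mem_univ _⟩ (fun p => s p x) with hM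
  have h1 : G.inf' (Finset.card_pos.mp (lt_of_lt_of_le hK hGK)) (molScore π s) ≤
      molScore π s x := by
    by_contra h
    push_neg at h
    have hsub : G ⊆ X.filter (fun y => molScore π s x < molScore π s y) := by
      intro y hy
      refine Finset.mem_filter.mpr ⟨hG hy, ?_⟩
      exact lt_of_lt_of_le h (Finset.inf'_le _ hy)
    have := Finset.card_le_card hsub
    omega
  have h2 : molScore π s x ≤ M := by
    unfold molScore
    calc ∑ p, π p x * s p x ≤ ∑ p, π p x * M := by
          refine Finset.sum_le_sum fun p _ => ?_
          exact mul_le_mul_of_nonneg_left (Finset.le_sup' (fun q => s q x) (Finset.mem_univ p)) (hπ0 p x hx)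
      _ = M := by rw [← Finset.sum_mul, hπ1 x hx, one_mul]
  refine ⟨le_trans h1 h2, ?_⟩
  obtain ⟨p, -, hp⟩ := Finset.exists_mem_eq_sup' (⟨⟨0, hP⟩, Finset.mem_univ _⟩ :
    (Finset.univ : Finset (Fin P)).Nonempty) (fun p => s p x)
  rw [hM, hp] at h2
  exact ⟨p, le_trans h1 h2⟩
end

section
/- Correctness of the exact two-pass top-K algorithm: let K ≤ |X| be a positive integer, let G ⊆ X with |G| ≥ K, set S_min = min_{y ∈ G} φ(y), and let G' = { z ∈ X : s_p(z) ≥ S_min for some 1 ≤ p ≤ P }. Then (a) every top-K set of X for φ is contained in G', and (b) every subset T ⊆ G' that is a top-K set for φ restricted to G' (|T| = K and φ(y) ≥ φ(z) for all y ∈ T and z ∈ G' \ T) is also a top-K set for φ on all of X. -/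
/-- Correctness of the exact two-pass top-`K` algorithm: with
`S_min = min_{y ∈ G} φ(y)` and `G' = {z ∈ X : ∃ p, s p z ≥ S_min}`,
(a) every top-`K` set of `X` for `φ` is contained in `G'`, and
(b) every top-`K` set of `G'` for `φ` is a top-`K` set of `X` for `φ`. -/
theorem two_pass_exact_topK_correct {α : Type*} [DecidableEq α] (P K : ℕ)
    (hP : 0 < P) (hK : 0 < K) (X : Finset α) (hX : X.Nonempty) (hKX : K ≤ X.card)
    (s π : Fin P → α → ℝ)
    (hπ0 : ∀ p, ∀ x ∈ X, 0 ≤ π p x)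
    (hπ1 : ∀ x ∈ X, ∑ p, π p x = 1)
    (G : Finset α) (hG : G ⊆ X) (hGK : K ≤ G.card) :
    (∀ T : Finset α, IsTopK X (molScore π s) K T →
      T ⊆ X.filter (fun z => ∃ p : Fin P,
        G.inf' (Finset.card_pos.mp (lt_of_lt_of_le hK hGK)) (molScore π s) ≤ s p z)) ∧
    (∀ T : Finset α,
      IsTopK (X.filter (fun z => ∃ p : Fin P,
          G.inf' (Finset.card_pos.mp (lt_of_lt_of_le hK hGK)) (molScore π s) ≤ s p z))
        (molScore π s) K T →
      IsTopK X (molScore π s) K T) := by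
  have hGne : G.Nonempty := Finset.card_pos.mp (lt_of_lt_of_le hK hGK)
  set φ := molScore π s with hφ
  set Smin := G.inf' hGne φ with hSmin
  set G' := X.filter (fun z => ∃ p : Fin P, Smin ≤ s p z) with hG'
  -- anything in X outside G' has φ < Smin
  have hout : ∀ z ∈ X, z ∉ G' → φ z < Smin := by
    intro z hz hzf
    rw [hG', Finset.mem_filter] at hzf
    push_neg at hzf
    have hlt : ∀ p, s p z < Smin := hzf hz
    have hp1 : ∑ p, π p z = 1 := hπ1 z hz
    obtain ⟨p0, hp0⟩ : ∃ p, 0 < π p z := by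
      by_contra h
      push_neg at h
      have h0 : ∑ p, π p z = 0 :=
        Finset.sum_eq_zero fun p _ => le_antisymm (h p) (hπ0 p z hz)
      rw [h0] at hp1; norm_num at hp1
    calc φ z = ∑ p, π p z * s p z := rfl
      _ < ∑ p : Fin P, π p z * Smin := by
          apply Finset.sum_lt_sum
          · intro p _; exact mul_le_mul_of_nonneg_left (hlt p).le (hπ0 p z hz)
          · exact ⟨p0, Finset.mem_univ _, mul_lt_mul_of_pos_left (hlt p0) hp0⟩
      _ = Smin := by rw [← Finset.sum_mul, hp1, one_mul]
  -- anything in X with φ ≥ Smin is in G'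
  have hmem : ∀ x ∈ X, Smin ≤ φ x → x ∈ G' := by
    intro x hx hxS
    by_contra h
    exact absurd hxS (not_le.mpr (hout x hx h))
  have hG'X : G' ⊆ X := Finset.filter_subset _ _
  have hGsub : G ⊆ G' := fun g hg => hmem g (hG hg) (Finset.inf'_le φ hg)
  constructor
  · rintro T ⟨hTX, hTcard, hTtop⟩ y hy
    have hkey : ∃ g ∈ G, φ g ≤ φ y := by
      by_cases hGT : G ⊆ T
      · have hGeq : G = T := Finset.eq_of_subset_of_card_le hGT (hTcard ▸ hGK)
        exact ⟨y, hGeq ▸ hy, le_refl _⟩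
      · obtain ⟨g, hgG, hgT⟩ := Finset.not_subset.mp hGT
        exact ⟨g, hgG, hTtop y hy g (hG hgG) hgT⟩
    obtain ⟨g, hgG, hgy⟩ := hkey
    exact hmem y (hTX hy) ((Finset.inf'_le φ hgG).trans hgy)
  · rintro T ⟨hTG', hTcard, hTtop⟩
    refine ⟨hTG'.trans hG'X, hTcard, ?_⟩
    intro y hy z hz hzT
    by_cases hzG' : z ∈ G'
    · exact hTtop y hy z hzG' hzT
    · have hzlt : φ z < Smin := hout z hz hzG'
      have hkey : ∃ g ∈ G, φ g ≤ φ y := by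
        by_cases hGT : G ⊆ T
        · have hGeq : G = T := Finset.eq_of_subset_of_card_le hGT (hTcard ▸ hGK)
          exact ⟨y, hGeq ▸ hy, le_refl _⟩
        · obtain ⟨g, hgG, hgT⟩ := Finset.not_subset.mp hGT
          exact ⟨g, hgG, hTtop y hy g (hGsub hgG) hgT⟩
      obtain ⟨g, hgG, hgy⟩ := hkey
      exact hzlt.le.trans ((Finset.inf'_le φ hgG).trans hgy)
end

section
/- Upper bound on the gap of the combined top-K heuristic: let K ≤ |X| be a positive integer, for each 1 ≤ p ≤ P let X_{K,p} ⊆ X be a top-K set for s_p, let X'_K ⊆ X be a top-K set for the average score a(x) = (1/P)·Σ_{p=1}^P s_p(x), and let G_c = (∪_{p=1}^P X_{K,p}) ∪ X'_K. Let X* ⊆ G_c be a top-K set for φ restricted to G_c (the heuristic's returned items), let S_min = min_{y ∈ X*} φ(y), and let X_K ⊆ X be a top-K set for φ on all of X. If X_K \ X* is nonempty and X \ G_c is nonempty, then with S' = max{φ(x) : x ∈ X \ G_c}, the gap S_Δ = max{φ(x) : x ∈ X_K \ X*} − S_min satisfies S_Δ ≤ max(0, S' − S_min). -/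
/-- Upper bound on the gap of the combined top-`K` heuristic: with candidate
set `G_c = (∪_p X_{K,p}) ∪ X'_K` and `S' = max {φ(x) : x ∈ X \ G_c}`, the gap
`S_Δ = max {φ(x) : x ∈ X_K \ X*} - S_min` is at most `max (0, S' - S_min)`. -/
theorem gap_combined_topK_le {α : Type*} [DecidableEq α] (P K : ℕ)
    (hP : 0 < P) (hK : 0 < K) (X : Finset α) (hX : X.Nonempty) (hKX : K ≤ X.card)
    (s π : Fin P → α → ℝ)
    (hπ0 : ∀ p, ∀ x ∈ X, 0 ≤ π p x)
    (hπ1 : ∀ x ∈ X, ∑ p, π p x = 1)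
    (XK : Fin P → Finset α) (hXK : ∀ p, IsTopK X (s p) K (XK p))
    (XK' : Finset α)
    (hXK' : IsTopK X (fun x => (1 / (P : ℝ)) * ∑ p, s p x) K XK')
    (Xstar : Finset α)
    (hstar : IsTopK (Finset.univ.biUnion XK ∪ XK') (molScore π s) K Xstar)
    (XKfull : Finset α) (hfull : IsTopK X (molScore π s) K XKfull)
    (hne : (XKfull \ Xstar).Nonempty)
    (hne' : (X \ (Finset.univ.biUnion XK ∪ XK')).Nonempty) :
    (XKfull \ Xstar).sup' hne (molScore π s) -
        Xstar.inf' (Finset.card_pos.mp (by rw [hstar.2.1]; exact hK)) (molScore π s) ≤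
      max 0
        ((X \ (Finset.univ.biUnion XK ∪ XK')).sup' hne' (molScore π s) -
          Xstar.inf' (Finset.card_pos.mp (by rw [hstar.2.1]; exact hK)) (molScore π s)) := by
  rw [sub_le_iff_le_add]
  apply Finset.sup'_le
  intro x hx
  obtain ⟨hxfull, hxstar⟩ := Finset.mem_sdiff.mp hx
  by_cases hG : x ∈ Finset.univ.biUnion XK ∪ XK'
  · -- x in candidate set but not in Xstar: φ x ≤ S_min
    have h : ∀ y ∈ Xstar, molScore π s x ≤ molScore π s y := fun y hy =>
      hstar.2.2 y hy x hG hxstar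
    calc molScore π s x ≤ Xstar.inf' _ (molScore π s) := Finset.le_inf' _ _ h
      _ ≤ _ := le_add_of_nonneg_left (le_max_left _ _)
  · have hxX : x ∈ X := hfull.1 hxfull
    have hmem : x ∈ X \ (Finset.univ.biUnion XK ∪ XK') := Finset.mem_sdiff.mpr ⟨hxX, hG⟩
    have h1 : molScore π s x ≤ (X \ (Finset.univ.biUnion XK ∪ XK')).sup' hne' (molScore π s) :=
      Finset.le_sup' _ hmem
    have h2 := le_max_right 0 ((X \ (Finset.univ.biUnion XK ∪ XK')).sup' hne' (molScore π s) -
          Xstar.inf' (Finset.card_pos.mp (by rw [hstar.2.1]; exact hK)) (molScore π s))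
    linarith
end
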